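/- arXiv:math/0607773 — 2 statements merged into one kernel-verified Lean document; each statement's English description precedes it below -/
import Mathlib

section
/- Let m ≥ 1 and let y be a holomorphic local inverse of the polynomial P(t) = (t^m − 1)², i.e., (y(x)^m − 1)² = x on a domain where P′(y(x)) ≠ 0. Then y satisfies the hypergeometric equation x(1−x)y″ + ((1/m − 3/2)x + 1/2)y′ + (1/(4m))(1 − 1/m)·y = 0. -/
set_option maxHeartbeats 1000000 in
/-- Any holomorphic local inverse `y` of `P(t) = (t^m - 1)²` satisfies the hypergeometric
equation `x(1-x) y'' + ((1/m - 3/2) x + 1/2) y' + (1/(4m))(1 - 1/m) y = 0`. -/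
theorem two_star_inverse_satisfies_hypergeometric
    (m : ℕ) (hm : 1 ≤ m) (U : Set ℂ) (hU : IsOpen U) (hUc : IsConnected U)
    (y : ℂ → ℂ) (hy : ∀ x ∈ U, DifferentiableAt ℂ y x)
    (hinv : ∀ x ∈ U, (y x ^ m - 1) ^ 2 = x)
    (hreg : ∀ x ∈ U, 2 * m * y x ^ (m - 1) * (y x ^ m - 1) ≠ 0) :
    ∀ x ∈ U,
      x * (1 - x) * deriv (deriv y) x
        + ((1 / (m : ℂ) - 3 / 2) * x + 1 / 2) * deriv y x
        + (1 / (4 * (m : ℂ))) * (1 - 1 / (m : ℂ)) * y x = 0 := by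
  -- the implicit-differentiation formula for `deriv y` on `U`
  have hderiv : ∀ z ∈ U, deriv y z
      = (2 * (m : ℂ) * y z ^ (m - 1) * (y z ^ m - 1))⁻¹ := by
    intro z hz
    have hyz : HasDerivAt y (deriv y z) z := (hy z hz).hasDerivAt
    have hEq : (fun t => (y t ^ m - 1) ^ 2) =ᶠ[nhds z] id := by
      filter_upwards [hU.mem_nhds hz] with t ht using hinv t ht
    have hL : HasDerivAt (fun t => (y t ^ m - 1) ^ 2)
        ((2 : ℕ) * (y z ^ m - 1) ^ (2 - 1) * ((m : ℂ) * y z ^ (m - 1) * deriv y z)) z :=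
      ((hyz.pow m).sub_const 1).pow 2
    have hR : HasDerivAt (fun t => (y t ^ m - 1) ^ 2) 1 z :=
      (hasDerivAt_id z).congr_of_eventuallyEq hEq
    have key := hL.unique hR
    refine eq_inv_of_mul_eq_one_left ?_
    push_cast at key ⊢
    linear_combination key
  intro x hx
  have hxU : U ∈ nhds x := hU.mem_nhds hx
  have hyx : HasDerivAt y (deriv y x) x := (hy x hx).hasDerivAt
  have hF0 : 2 * (m : ℂ) * y x ^ (m - 1) * (y x ^ m - 1) ≠ 0 := by
    have := hreg x hx; exact by push_cast at this ⊢; exact this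
  -- derivative of F
  have hF : HasDerivAt (fun z => 2 * (m : ℂ) * y z ^ (m - 1) * (y z ^ m - 1))
      ((2 * (m : ℂ) * (((m - 1 : ℕ) : ℂ) * y x ^ (m - 1 - 1) * deriv y x)) * (y x ^ m - 1)
        + (2 * (m : ℂ) * y x ^ (m - 1)) * ((m : ℂ) * y x ^ (m - 1) * deriv y x)) x :=
    ((hyx.pow (m - 1)).const_mul (2 * (m : ℂ))).mul ((hyx.pow m).sub_const 1)
  have hFinv := hF.inv hF0
  have hEq2 : deriv y =ᶠ[nhds x] fun z => (2 * (m : ℂ) * y z ^ (m - 1) * (y z ^ m - 1))⁻¹ := by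
    filter_upwards [hxU] with z hz using hderiv z hz
  have hy'' : deriv (deriv y) x
      = -((2 * (m : ℂ) * (((m - 1 : ℕ) : ℂ) * y x ^ (m - 1 - 1) * deriv y x)) * (y x ^ m - 1)
          + (2 * (m : ℂ) * y x ^ (m - 1)) * ((m : ℂ) * y x ^ (m - 1) * deriv y x))
        / (2 * (m : ℂ) * y x ^ (m - 1) * (y x ^ m - 1)) ^ 2 := by
    rw [hEq2.deriv_eq]; exact hFinv.deriv
  -- nonvanishing of the factors
  have hm0 : (m : ℂ) ≠ 0 := Nat.cast_ne_zero.mpr (by omega)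
  have hwp : y x ^ (m - 1) ≠ 0 := fun h => hF0 (by rw [h]; ring)
  have ha : y x ^ m - 1 ≠ 0 := fun h => hF0 (by rw [h]; ring)
  have hx2 : (y x ^ m - 1) ^ 2 = x := hinv x hx
  have hy' := hderiv x hx
  have hE1 : (2 * (m : ℂ) * y x ^ (m - 1) * (y x ^ m - 1)) * deriv y x = 1 := by
    rw [hy']; exact mul_inv_cancel₀ hF0
  have hE2 := (eq_div_iff (pow_ne_zero 2 hF0)).mp hy''
  have hc2 : (2 * (m : ℂ) * y x ^ (m - 1) * (y x ^ m - 1)) ^ 2 ≠ 0 := pow_ne_zero 2 hF0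
  field_simp
  rw [← sub_eq_zero]
  refine (mul_eq_zero.mp ?_).resolve_right hc2
  obtain ⟨k, rfl⟩ : ∃ k, m = k + 1 := ⟨m - 1, (Nat.succ_pred_eq_of_pos hm).symm⟩
  simp only [Nat.add_sub_cancel] at hE1 hE2 ⊢
  rcases k with _ | j
  · push_cast at hE1 hE2 ⊢
    linear_combination (8 * x * (1 - x)) * hE2
      + (8 * ((-(2 * deriv y x)) * (x + (y x - 1) ^ 2 - 1) + 2 * (y x - 1) ^ 2 * deriv y x)) * hx2
  · simp only [Nat.add_sub_cancel] at hE1 hE2 ⊢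
    push_cast at hE1 hE2 ⊢
    linear_combination (8 * ((j : ℂ) + 2) ^ 2 * x * (1 - x)) * hE2
      + (8 * ((j : ℂ) + 2) ^ 2 * (-((j : ℂ) + 1)) * y x * (y x ^ (j + 1)) ^ 2
          * (y x ^ (j + 2) - 1) ^ 2) * hE1
      + (8 * ((j : ℂ) + 2) ^ 2 *
          ((-(2 * ((j : ℂ) + 2) * (((j : ℂ) + 1) * y x ^ j * deriv y x) * (y x ^ (j + 2) - 1)
            + 2 * ((j : ℂ) + 2) * y x ^ (j + 1) * (((j : ℂ) + 2) * y x ^ (j + 1) * deriv y x))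
            * (x + (y x ^ (j + 2) - 1) ^ 2 - 1))
          - (4 * ((j : ℂ) + 2) - 6 * ((j : ℂ) + 2) ^ 2) * (y x ^ (j + 1)) ^ 2
            * (y x ^ (j + 2) - 1) ^ 2 * deriv y x)) * hx2
end

section
/- Let y be a holomorphic local inverse of P(x) = 4x³ − x⁴, i.e., 4y(x)³ − y(x)⁴ = x on a domain where P′(y(x)) ≠ 0. Then y satisfies the fourth-order equation (32x⁴ − 864x³)y⁗ + (208x³ − 3456x²)y‴ + (270x² − 1920x)y″ + 45x·y′ = 0. -/
set_option maxHeartbeats 1600000 in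
/-- Any holomorphic local inverse `y` of `P(x) = 4x³ - x⁴` satisfies the fourth-order
Fuchsian equation
`(32x⁴ - 864x³) y'''' + (208x³ - 3456x²) y''' + (270x² - 1920x) y'' + 45x y' = 0`. -/
theorem quartic_tree_inverse_satisfies_ode
    (U : Set ℂ) (hU : IsOpen U) (hUc : IsConnected U)
    (y : ℂ → ℂ) (hy : ∀ x ∈ U, DifferentiableAt ℂ y x)
    (hinv : ∀ x ∈ U, 4 * y x ^ 3 - y x ^ 4 = x)
    (hreg : ∀ x ∈ U, 12 * y x ^ 2 - 4 * y x ^ 3 ≠ 0) :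
    ∀ x ∈ U,
      (32 * x ^ 4 - 864 * x ^ 3) * iteratedDeriv 4 y x
        + (208 * x ^ 3 - 3456 * x ^ 2) * iteratedDeriv 3 y x
        + (270 * x ^ 2 - 1920 * x) * iteratedDeriv 2 y x
        + 45 * x * deriv y x = 0 := by
  -- abbreviations for derivatives of P at y x
  have hA := hreg
  -- derivative of A ∘ y, B ∘ y, C ∘ y
  have hdA : ∀ x ∈ U, HasDerivAt (fun t => 12 * y t ^ 2 - 4 * y t ^ 3)
      ((24 * y x - 12 * y x ^ 2) * deriv y x) x := by
    intro x hx
    have hyd := (hy x hx).hasDerivAt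
    have := (((hyd.pow 2).const_mul (12:ℂ))).sub ((hyd.pow 3).const_mul (4:ℂ))
    refine this.congr_deriv ?_
    push_cast
    ring
  -- Step 1 : y' = 1 / P'(y)
  have h1 : ∀ x ∈ U, deriv y x = (12 * y x ^ 2 - 4 * y x ^ 3)⁻¹ := by
    intro x hx
    have hyd := (hy x hx).hasDerivAt
    have hP : HasDerivAt (fun t => 4 * y t ^ 3 - y t ^ 4)
        ((12 * y x ^ 2 - 4 * y x ^ 3) * deriv y x) x := by
      have := ((hyd.pow 3).const_mul (4:ℂ)).sub (hyd.pow 4)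
      refine this.congr_deriv ?_
      try push_cast
      try ring
    have hid : HasDerivAt (fun t => 4 * y t ^ 3 - y t ^ 4) 1 x := by
      have hev : (fun t => 4 * y t ^ 3 - y t ^ 4) =ᶠ[nhds x] id :=
        Filter.eventuallyEq_of_mem (hU.mem_nhds hx) (fun t ht => hinv t ht)
      exact (hasDerivAt_id x).congr_of_eventuallyEq hev
    exact eq_inv_of_mul_eq_one_right (hP.unique hid)
  -- Step 2 : y'' = -P''(y) / P'(y)^3
  have h2 : ∀ x ∈ U, deriv (deriv y) x
      = -(24 * y x - 12 * y x ^ 2) / (12 * y x ^ 2 - 4 * y x ^ 3) ^ 3 := by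
    intro x hx
    have hev : deriv y =ᶠ[nhds x] fun t => (12 * y t ^ 2 - 4 * y t ^ 3)⁻¹ :=
      Filter.eventuallyEq_of_mem (hU.mem_nhds hx) (fun t ht => h1 t ht)
    have hg : HasDerivAt (fun t => (12 * y t ^ 2 - 4 * y t ^ 3)⁻¹)
        (-((24 * y x - 12 * y x ^ 2) * deriv y x) / (12 * y x ^ 2 - 4 * y x ^ 3) ^ 2) x :=
      (hdA x hx).inv (hA x hx)
    rw [hev.deriv_eq, hg.deriv, h1 x hx]
    have := hA x hx
    field_simp
  -- Step 3 : y''' = (3 P''² - P' P''') / P'^5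
  have h3 : ∀ x ∈ U, deriv (deriv (deriv y)) x
      = (3 * (24 * y x - 12 * y x ^ 2) ^ 2
          - (12 * y x ^ 2 - 4 * y x ^ 3) * (24 - 24 * y x))
        / (12 * y x ^ 2 - 4 * y x ^ 3) ^ 5 := by
    intro x hx
    have hyd := (hy x hx).hasDerivAt
    have hev : deriv (deriv y) =ᶠ[nhds x]
        (fun t => -(24 * y t - 12 * y t ^ 2) / (12 * y t ^ 2 - 4 * y t ^ 3) ^ 3) :=
      Filter.eventuallyEq_of_mem (hU.mem_nhds hx) (fun t ht => h2 t ht)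
    have hnum : HasDerivAt (fun t => -(24 * y t - 12 * y t ^ 2))
        (-((24 - 24 * y x) * deriv y x)) x := by
      have := ((hyd.const_mul (24:ℂ)).sub ((hyd.pow 2).const_mul (12:ℂ))).neg
      refine this.congr_deriv ?_
      try push_cast
      try ring
    have hden : HasDerivAt (fun t => (12 * y t ^ 2 - 4 * y t ^ 3) ^ 3)
        (3 * (12 * y x ^ 2 - 4 * y x ^ 3) ^ 2 * ((24 * y x - 12 * y x ^ 2) * deriv y x)) x := by
      have := (hdA x hx).pow 3
      refine this.congr_deriv ?_
      try push_cast
      try ring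
    have hg : HasDerivAt (fun t => -(24 * y t - 12 * y t ^ 2) / (12 * y t ^ 2 - 4 * y t ^ 3) ^ 3) _ x :=
      hnum.div hden (pow_ne_zero 3 (hA x hx))
    rw [hev.deriv_eq, hg.deriv, h1 x hx]
    have := hA x hx
    field_simp
    ring
  -- Step 4 : y'''' = (-15 P''³ + 10 P' P'' P''' + 24 P'²) / P'^7
  have h4 : ∀ x ∈ U, deriv (deriv (deriv (deriv y))) x
      = (-15 * (24 * y x - 12 * y x ^ 2) ^ 3
          + 10 * (12 * y x ^ 2 - 4 * y x ^ 3) * (24 * y x - 12 * y x ^ 2) * (24 - 24 * y x)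
          + 24 * (12 * y x ^ 2 - 4 * y x ^ 3) ^ 2)
        / (12 * y x ^ 2 - 4 * y x ^ 3) ^ 7 := by
    intro x hx
    have hyd := (hy x hx).hasDerivAt
    have hev : deriv (deriv (deriv y)) =ᶠ[nhds x]
        (fun t => (3 * (24 * y t - 12 * y t ^ 2) ^ 2
            - (12 * y t ^ 2 - 4 * y t ^ 3) * (24 - 24 * y t))
          / (12 * y t ^ 2 - 4 * y t ^ 3) ^ 5) :=
      Filter.eventuallyEq_of_mem (hU.mem_nhds hx) (fun t ht => h3 t ht)
    have hB : HasDerivAt (fun t => 24 * y t - 12 * y t ^ 2)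
        ((24 - 24 * y x) * deriv y x) x := by
      have := (hyd.const_mul (24:ℂ)).sub ((hyd.pow 2).const_mul (12:ℂ))
      refine this.congr_deriv ?_
      try push_cast
      try ring
    have hC : HasDerivAt (fun t => 24 - 24 * y t) (-(24 * deriv y x)) x := by
      have := ((hyd.const_mul (24:ℂ)).const_sub (24:ℂ))
      refine this.congr_deriv ?_
      try ring
    have hnum : HasDerivAt
        (fun t => 3 * (24 * y t - 12 * y t ^ 2) ^ 2
            - (12 * y t ^ 2 - 4 * y t ^ 3) * (24 - 24 * y t))
        ((6 * (24 * y x - 12 * y x ^ 2) * (24 - 24 * y x)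
            - ((24 * y x - 12 * y x ^ 2) * (24 - 24 * y x)
              - 24 * (12 * y x ^ 2 - 4 * y x ^ 3))) * deriv y x) x := by
      have := (((hB.pow 2).const_mul (3:ℂ))).sub ((hdA x hx).mul hC)
      refine this.congr_deriv ?_
      try push_cast
      try ring
    have hden : HasDerivAt (fun t => (12 * y t ^ 2 - 4 * y t ^ 3) ^ 5)
        (5 * (12 * y x ^ 2 - 4 * y x ^ 3) ^ 4 * ((24 * y x - 12 * y x ^ 2) * deriv y x)) x := by
      have := (hdA x hx).pow 5
      refine this.congr_deriv ?_
      try push_cast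
      try ring
    have hg : HasDerivAt (fun t => (3 * (24 * y t - 12 * y t ^ 2) ^ 2
            - (12 * y t ^ 2 - 4 * y t ^ 3) * (24 - 24 * y t))
          / (12 * y t ^ 2 - 4 * y t ^ 3) ^ 5) _ x :=
      hnum.div hden (pow_ne_zero 5 (hA x hx))
    rw [hev.deriv_eq, hg.deriv, h1 x hx]
    have := hA x hx
    field_simp
    ring
  -- combine
  intro x hx
  have e1 := h1 x hx
  have e2 := h2 x hx
  have e3 := h3 x hx
  have e4 := h4 x hx
  have hAx := hA x hx
  have hx4 := hinv x hx
  have hi2 : iteratedDeriv 2 y = deriv (deriv y) := by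
    rw [iteratedDeriv_succ, iteratedDeriv_one]
  have hi3 : iteratedDeriv 3 y = deriv (deriv (deriv y)) := by
    rw [iteratedDeriv_succ, iteratedDeriv_succ, iteratedDeriv_one]
  have hi4 : iteratedDeriv 4 y = deriv (deriv (deriv (deriv y))) := by
    rw [iteratedDeriv_succ, iteratedDeriv_succ, iteratedDeriv_succ, iteratedDeriv_one]
  obtain ⟨d, hd⟩ : ∃ d, y x = d := ⟨y x, rfl⟩
  rw [hd] at e1 e2 e3 e4 hAx hx4
  rw [hi2, hi3, hi4, e1, e2, e3, e4, ← hx4]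
  field_simp
  ring
end
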